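/- arXiv:2301.03732 — 2 statements merged into one kernel-verified Lean document; each statement's English description precedes it below -/
import Mathlib

section
/- Under the hypotheses of the monotonicity theorem (c a convex plane curve of curvature k ≥ 0, c̃ a unit-speed curve in ℝⁿ⁺¹ with curvature ≤ k, ι the isometric inclusion associated to [s', s'']), for any s' ≤ s'₊ < s''₊ ≤ s'' one has ⟨c(s''₊) - c(s'₊), c(s'') - c(s')⟩ ≤ ⟨c̃(s''₊) - c̃(s'₊), ι(c(s'') - c(s'))⟩. In particular, taking s'₊ = s', s''₊ = s'': |c(s'') - c(s')|² ≤ ⟨c̃(s'') - c̃(s'), ι(c(s'') - c(s'))⟩. -/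
/-!
With `v = c s'' - c s'`, the hypothesis on `ι` says that the derivative of
`s ↦ ⟪c̃ s - ι (c s), ι v⟫` is nonnegative on `[s', s'']`, so this function is monotone there.
Comparing its values at `s'₊ ≤ s''₊` and using `⟪ι x, ι v⟫ = ⟪x, v⟫` gives the chord inequality;
at `s'₊ = s'`, `s''₊ = s''` its left side is `‖v‖²`.
-/

open scoped RealInnerProductSpace

noncomputable def vec2 (x y : ℝ) : EuclideanSpace ℝ (Fin 2) := (WithLp.equiv 2 _).symm ![x, y]

open Set

variable {E F : Type*} [NormedAddCommGroup E] [InnerProductSpace ℝ E]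
  [NormedAddCommGroup F] [InnerProductSpace ℝ F]

theorem monotoneOn_inner_of_hasDerivAt {D : Set ℝ} (hD : Convex ℝ D) {f f' : ℝ → F} {w : F}
    (hf : ∀ s ∈ D, HasDerivAt f (f' s) s) (hw : ∀ s ∈ D, 0 ≤ ⟪f' s, w⟫) :
    MonotoneOn (fun s => ⟪f s, w⟫) D := by
  have hderiv : ∀ s ∈ D, HasDerivAt (fun s => ⟪f s, w⟫) ⟪f' s, w⟫ s := fun s hs => by
    simpa only [inner_zero_right, zero_add] using (hf s hs).inner ℝ (hasDerivAt_const s w)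
  exact monotoneOn_of_hasDerivWithinAt_nonneg hD
    (fun s hs => (hderiv s hs).continuousAt.continuousWithinAt)
    (fun s hs => (hderiv s (interior_subset hs)).hasDerivWithinAt)
    (fun s hs => hw s (interior_subset hs))

theorem inner_sub_le_inner_sub_of_hasDerivAt (ι : E →ₗᵢ[ℝ] F) {c T : ℝ → E} {ct Tt : ℝ → F}
    {v : E} {a b p q : ℝ}
    (hc : ∀ s ∈ Icc a b, HasDerivAt c (T s) s) (hct : ∀ s ∈ Icc a b, HasDerivAt ct (Tt s) s)
    (hv : ∀ s ∈ Icc a b, 0 ≤ ⟪Tt s - ι (T s), ι v⟫) (hp : a ≤ p) (hpq : p ≤ q) (hq : q ≤ b) :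
    ⟪c q - c p, v⟫ ≤ ⟪ct q - ct p, ι v⟫ := by
  have hgap : ∀ s ∈ Icc a b, HasDerivAt (fun s => ct s - ι (c s)) (Tt s - ι (T s)) s :=
    fun s hs => (hct s hs).sub (ι.toContinuousLinearMap.hasFDerivAt.comp_hasDerivAt s (hc s hs))
  have hmono := monotoneOn_inner_of_hasDerivAt (convex_Icc a b) hgap hv
    ⟨hp, hpq.trans hq⟩ ⟨hp.trans hpq, hq⟩ hpq
  simp only [inner_sub_left, ι.inner_map_map] at hmono ⊢
  linarith

theorem schur_monotonicity_corollary_general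
    (n : ℕ) (L : ℝ)
    (c : ℝ → EuclideanSpace ℝ (Fin 2))
    (T : ℝ → EuclideanSpace ℝ (Fin 2))
    (ct : ℝ → EuclideanSpace ℝ (Fin (n + 1)))
    (Tt : ℝ → EuclideanSpace ℝ (Fin (n + 1)))
    (hc : ∀ s ∈ Set.Icc 0 L, HasDerivAt c (T s) s)
    (hct : ∀ s ∈ Set.Icc 0 L, HasDerivAt ct (Tt s) s)
    (s' s'' : ℝ) (hs' : 0 ≤ s') (hss : s' < s'') (hs'' : s'' ≤ L)
    (ι : EuclideanSpace ℝ (Fin 2) →ₗᵢ[ℝ] EuclideanSpace ℝ (Fin (n + 1)))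
    -- ι is the isometric inclusion from the monotonicity theorem:
    (hι : ∀ s ∈ Set.Icc s' s'', 0 ≤ ⟪Tt s - ι (T s), ι (c s'' - c s')⟫) :
    (∀ s'p s''p, s' ≤ s'p → s'p < s''p → s''p ≤ s'' →
        ⟪c s''p - c s'p, c s'' - c s'⟫ ≤ ⟪ct s''p - ct s'p, ι (c s'' - c s')⟫) ∧
      ‖c s'' - c s'‖ ^ 2 ≤ ⟪ct s'' - ct s', ι (c s'' - c s')⟫ := by
  have hsub : Icc s' s'' ⊆ Icc 0 L := Icc_subset_Icc hs' hs''
  have chord : ∀ p q, s' ≤ p → p ≤ q → q ≤ s'' →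
      ⟪c q - c p, c s'' - c s'⟫ ≤ ⟪ct q - ct p, ι (c s'' - c s')⟫ :=
    fun p q hp hpq hq => inner_sub_le_inner_sub_of_hasDerivAt ι (fun s hs => hc s (hsub hs))
      (fun s hs => hct s (hsub hs)) hι hp hpq hq
  refine ⟨fun p q hp hpq hq => chord p q hp hpq.le hq, ?_⟩
  simpa only [real_inner_self_eq_norm_sq] using chord s' s'' le_rfl hss.le le_rfl

/-- **Corollary of the monotonicity theorem.**  Under the hypotheses of Schur's monotonicity
theorem, with `ι` the isometric inclusion associated to `[s', s'']` (satisfying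
`⟪Tt s - ι (T s), ι (c s'' - c s')⟫ ≥ 0` on `[s', s'']`), for all `s' ≤ s'₊ < s''₊ ≤ s''`
one has `⟪c s''₊ - c s'₊, c s'' - c s'⟫ ≤ ⟪ct s''₊ - ct s'₊, ι (c s'' - c s')⟫`, and in
particular `‖c s'' - c s'‖² ≤ ⟪ct s'' - ct s', ι (c s'' - c s')⟫`. -/
theorem schur_monotonicity_corollary
    (n : ℕ) (hn : 1 ≤ n) (L : ℝ) (hL : 0 < L)
    (c : ℝ → EuclideanSpace ℝ (Fin 2)) (θ k : ℝ → ℝ)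
    (T : ℝ → EuclideanSpace ℝ (Fin 2))
    (ct : ℝ → EuclideanSpace ℝ (Fin (n + 1)))
    (Tt Tt' : ℝ → EuclideanSpace ℝ (Fin (n + 1)))
    (hT : ∀ s, T s = vec2 (Real.cos (θ s)) (Real.sin (θ s)))
    (hc : ∀ s ∈ Set.Icc 0 L, HasDerivAt c (T s) s)
    (hθ : ∀ s ∈ Set.Icc 0 L, HasDerivAt θ (k s) s)
    (hk : ∀ s ∈ Set.Icc 0 L, 0 ≤ k s)
    (hemb : Set.InjOn c (Set.Icc 0 L))
    (hct : ∀ s ∈ Set.Icc 0 L, HasDerivAt ct (Tt s) s)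
    (hunit : ∀ s ∈ Set.Icc 0 L, ‖Tt s‖ = 1)
    (hTt : ∀ s ∈ Set.Icc 0 L, HasDerivAt Tt (Tt' s) s)
    (hcomp : ∀ s ∈ Set.Icc 0 L, ‖Tt' s‖ ≤ k s)
    (s' s'' : ℝ) (hs' : 0 ≤ s') (hss : s' < s'') (hs'' : s'' ≤ L)
    (ι : EuclideanSpace ℝ (Fin 2) →ₗᵢ[ℝ] EuclideanSpace ℝ (Fin (n + 1)))
    -- ι is the isometric inclusion from the monotonicity theorem:
    (hι : ∀ s ∈ Set.Icc s' s'', 0 ≤ ⟪Tt s - ι (T s), ι (c s'' - c s')⟫) :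
    (∀ s'p s''p, s' ≤ s'p → s'p < s''p → s''p ≤ s'' →
        ⟪c s''p - c s'p, c s'' - c s'⟫ ≤ ⟪ct s''p - ct s'p, ι (c s'' - c s')⟫) ∧
      ‖c s'' - c s'‖ ^ 2 ≤ ⟪ct s'' - ct s', ι (c s'' - c s')⟫ :=
  schur_monotonicity_corollary_general n L c T ct Tt hc hct s' s'' hs' hss hs'' ι hι
end

section
/- Let c : [0, L] → ℝ² be a unit-speed curve with curvature k(s) ≤ 1/r, and let C be a circle of radius r through c(0) and c(L). Then L is either at most the length of the minor arc of C between c(0) and c(L), or at least the length of the major arc. (Schwartz's theorem, as a consequence of Schur's theorem.) -/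
open scoped RealInnerProductSpace
open Real InnerProductGeometry

variable {V : Type*} [NormedAddCommGroup V] [InnerProductSpace ℝ V]

lemma arccos_le_arccos' {x y : ℝ} (h : x ≤ y) : Real.arccos y ≤ Real.arccos x := by
  rw [Real.arccos_eq_pi_div_two_sub_arcsin, Real.arccos_eq_pi_div_two_sub_arcsin]
  have := Real.monotone_arcsin h
  linarith

lemma inner_unit_eq {u v : V} (hu : ‖u‖ = 1) (hv : ‖v‖ = 1) :
    ⟪u, v⟫ = 1 - ‖u - v‖ ^ 2 / 2 := by
  have h := norm_sub_sq_real u v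
  rw [hu, hv] at h
  nlinarith [h]

lemma angle_unit_eq_arccos {u v : V} (hu : ‖u‖ = 1) (hv : ‖v‖ = 1) :
    angle u v = Real.arccos ⟪u, v⟫ := by
  rw [angle, hu, hv]
  norm_num

lemma angle_unit_eq_two_arcsin {u v : V} (hu : ‖u‖ = 1) (hv : ‖v‖ = 1) :
    angle u v = 2 * Real.arcsin (‖u - v‖ / 2) := by
  have hx0 : (0:ℝ) ≤ ‖u - v‖ / 2 := by positivity
  have hx1 : ‖u - v‖ / 2 ≤ 1 := by
    have := norm_sub_le u v
    rw [hu, hv] at this; linarith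
  rw [angle_unit_eq_arccos hu hv, inner_unit_eq hu hv]
  apply Real.arccos_eq_of_eq_cos
  · have := Real.arcsin_nonneg.2 hx0; linarith
  · have := Real.arcsin_le_pi_div_two (‖u - v‖ / 2); linarith
  · rw [Real.cos_two_mul, Real.cos_arcsin,
      Real.sq_sqrt (by nlinarith : (0:ℝ) ≤ 1 - (‖u - v‖ / 2) ^ 2)]
    ring

lemma angle_triangle_unit {u v w : V} (hu : ‖u‖ = 1) (hv : ‖v‖ = 1) (hw : ‖w‖ = 1) :
    angle u w ≤ angle u v + angle v w := by
  by_cases hπ : Real.pi ≤ angle u v + angle v w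
  · exact le_trans (angle_le_pi u w) hπ
  push_neg at hπ
  set f := (⟪u, v⟫ : ℝ) with hf
  set g := (⟪v, w⟫ : ℝ) with hg
  have hv2 : ⟪v, v⟫ = (1:ℝ) := by
    rw [real_inner_self_eq_norm_sq, hv]; norm_num
  have hu2 : ⟪u, u⟫ = (1:ℝ) := by
    rw [real_inner_self_eq_norm_sq, hu]; norm_num
  have hw2 : ⟪w, w⟫ = (1:ℝ) := by
    rw [real_inner_self_eq_norm_sq, hw]; norm_num
  have hf1 : |f| ≤ 1 := by
    have := abs_real_inner_le_norm u v; rwa [hu, hv, one_mul] at this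
  have hg1 : |g| ≤ 1 := by
    have := abs_real_inner_le_norm v w; rwa [hv, hw, one_mul] at this
  have hexp : ∀ (x y : V) (a b : ℝ), ⟪x - a • v, y - b • v⟫
      = ⟪x, y⟫ - b * ⟪x, v⟫ - a * ⟪v, y⟫ + a * b * ⟪v, v⟫ := by
    intro x y a b
    rw [inner_sub_left, inner_sub_right, inner_sub_right, real_inner_smul_left,
      real_inner_smul_left, real_inner_smul_right, real_inner_smul_right]
    ring
  have hvu : ⟪v, u⟫ = f := real_inner_comm u v
  have hwv : ⟪w, v⟫ = g := real_inner_comm v w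
  have hnu : ‖u - f • v‖ ^ 2 = 1 - f ^ 2 := by
    rw [← real_inner_self_eq_norm_sq, hexp, hu2, hv2, hvu, ← hf]; ring
  have hnw : ‖w - g • v‖ ^ 2 = 1 - g ^ 2 := by
    rw [← real_inner_self_eq_norm_sq, hexp, hw2, hv2, hwv, ← hg]; ring
  have hinner : ⟪u - f • v, w - g • v⟫ = ⟪u, w⟫ - f * g := by
    rw [hexp, hv2, ← hf, ← hg]; ring
  have hCS : |⟪u, w⟫ - f * g| ≤ Real.sqrt (1 - f ^ 2) * Real.sqrt (1 - g ^ 2) := by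
    have h := abs_real_inner_le_norm (u - f • v) (w - g • v)
    rw [hinner] at h
    have h1 : ‖u - f • v‖ = Real.sqrt (1 - f ^ 2) := by
      rw [← hnu]; exact (Real.sqrt_sq (norm_nonneg _)).symm
    have h2 : ‖w - g • v‖ = Real.sqrt (1 - g ^ 2) := by
      rw [← hnw]; exact (Real.sqrt_sq (norm_nonneg _)).symm
    rwa [h1, h2] at h
  have hcosab : Real.cos (angle u v + angle v w) ≤ ⟪u, w⟫ := by
    rw [Real.cos_add]
    have hca : Real.cos (angle u v) = f := by
      rw [angle_unit_eq_arccos hu hv]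
      exact Real.cos_arccos (neg_le_of_abs_le hf1) (le_of_abs_le hf1)
    have hcb : Real.cos (angle v w) = g := by
      rw [angle_unit_eq_arccos hv hw]
      exact Real.cos_arccos (neg_le_of_abs_le hg1) (le_of_abs_le hg1)
    have hsa : Real.sin (angle u v) = Real.sqrt (1 - f ^ 2) := by
      rw [angle_unit_eq_arccos hu hv, Real.sin_arccos]
    have hsb : Real.sin (angle v w) = Real.sqrt (1 - g ^ 2) := by
      rw [angle_unit_eq_arccos hv hw, Real.sin_arccos]
    rw [hca, hcb, hsa, hsb]
    have := abs_le.1 hCS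
    linarith [this.1]
  calc angle u w = Real.arccos ⟪u, w⟫ := angle_unit_eq_arccos hu hw
    _ ≤ Real.arccos (Real.cos (angle u v + angle v w)) := arccos_le_arccos' hcosab
    _ = angle u v + angle v w := Real.arccos_cos
        (add_nonneg (angle_nonneg u v) (angle_nonneg v w)) hπ.le

lemma arcsin_le_self_add_cube {y : ℝ} (h0 : 0 ≤ y) (h : y ≤ 1/2) :
    Real.arcsin y ≤ y + y ^ 3 := by
  rcases eq_or_lt_of_le h0 with h0' | h0'
  · simp [← h0']
  have hy3 : y ^ 3 ≤ (1/2) ^ 3 := pow_le_pow_left₀ h0 h 3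
  have hz1 : y + y ^ 3 ≤ 1 := by norm_num at hy3 ⊢; linarith
  have hz0 : 0 < y + y ^ 3 := by positivity
  have hsin := Real.sin_gt_sub_cube hz0
  have hy2 : y ^ 2 ≤ 1/4 := by nlinarith
  have hz : y + y ^ 3 ≤ (5/4) * y := by nlinarith
  have hcube : (y + y ^ 3) ^ 3 ≤ ((5/4) * y) ^ 3 := pow_le_pow_left₀ (by positivity) hz 3
  have hy : y ≤ Real.sin (y + y ^ 3) := by nlinarith
  have h2 : Real.arcsin y ≤ Real.arcsin (Real.sin (y + y ^ 3)) := Real.monotone_arcsin hy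
  rwa [Real.arcsin_sin (by linarith [Real.pi_gt_three]) (by linarith [Real.pi_gt_three])] at h2
set_option maxHeartbeats 2000000 in
open Real InnerProductGeometry MeasureTheory in
/-- **Schwartz's theorem.**  Let `c : [0,L] → ℝ²` be a unit-speed curve with curvature
`‖c'' s‖ ≤ 1/r`, and let `C` be a circle of radius `r` (center `o`) through `c 0` and `c L`.
Then `L` is either at most the length `2 r arcsin(‖c L − c 0‖ / (2r))` of the minor arc of
`C` between the endpoints, or at least the length `2πr − 2 r arcsin(‖c L − c 0‖ / (2r))` of
the major arc. -/
theorem schwartz_theorem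
    (L r : ℝ) (hL : 0 < L) (hr : 0 < r)
    (c T T' : ℝ → EuclideanSpace ℝ (Fin 2))
    (hc : ∀ s ∈ Set.Icc 0 L, HasDerivAt c (T s) s)
    (hunit : ∀ s ∈ Set.Icc 0 L, ‖T s‖ = 1)
    (hT : ∀ s ∈ Set.Icc 0 L, HasDerivAt T (T' s) s)
    -- curvature bound k(s) = ‖c''(s)‖ ≤ 1/r
    (hk : ∀ s ∈ Set.Icc 0 L, ‖T' s‖ ≤ 1 / r)
    -- C is a circle of radius r passing through c 0 and c L, with center o
    (o : EuclideanSpace ℝ (Fin 2))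
    (ho0 : dist o (c 0) = r) (hoL : dist o (c L) = r) :
    L ≤ 2 * r * Real.arcsin (‖c L - c 0‖ / (2 * r)) ∨
    2 * Real.pi * r - 2 * r * Real.arcsin (‖c L - c 0‖ / (2 * r)) ≤ L := by
  set d := ‖c L - c 0‖ with hd
  have hd0 : 0 ≤ d := norm_nonneg _
  have hd2r : d ≤ 2 * r := by
    have he : c L - c 0 = (c L - o) + (o - c 0) := by abel
    calc d = ‖(c L - o) + (o - c 0)‖ := by rw [hd, he]
      _ ≤ ‖c L - o‖ + ‖o - c 0‖ := norm_add_le _ _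
      _ = 2 * r := by
        rw [← dist_eq_norm, ← dist_eq_norm, dist_comm (c L) o, hoL, ho0]; ring
  have hA0 : 0 ≤ Real.arcsin (d / (2 * r)) := Real.arcsin_nonneg.2 (by positivity)
  by_cases hbig : 2 * Real.pi * r < L
  · right
    have : 0 ≤ 2 * r * Real.arcsin (d / (2 * r)) := mul_nonneg (by linarith) hA0
    linarith
  push_neg at hbig
  -- the key angle estimate:  angle (T s) (T t) ≤ (t - s)/r
  have hTW : ∀ s ∈ Set.Icc (0:ℝ) L, HasDerivWithinAt T (T' s) (Set.Icc 0 L) s :=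
    fun s hs => (hT s hs).hasDerivWithinAt
  have hchord : ∀ s ∈ Set.Icc (0:ℝ) L, ∀ t ∈ Set.Icc (0:ℝ) L,
      ‖T t - T s‖ ≤ (1 / r) * ‖t - s‖ :=
    fun s hs t ht =>
      (convex_Icc (0:ℝ) L).norm_image_sub_le_of_norm_hasDerivWithin_le hTW hk hs ht
  have hstep : ∀ s ∈ Set.Icc (0:ℝ) L, ∀ t ∈ Set.Icc (0:ℝ) L, s ≤ t →
      angle (T s) (T t) ≤ 2 * Real.arcsin ((t - s) / (2 * r)) := by
    intro s hs t ht hst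
    rw [angle_unit_eq_two_arcsin (hunit s hs) (hunit t ht)]
    have h1 : ‖T s - T t‖ / 2 ≤ (t - s) / (2 * r) := by
      have h := hchord s hs t ht
      rw [norm_sub_rev (T t)] at h
      rw [Real.norm_eq_abs, abs_of_nonneg (by linarith)] at h
      have he : (t - s) / (2 * r) = (1 / r * (t - s)) / 2 := by ring
      rw [he]; linarith
    have := Real.monotone_arcsin h1
    linarith
  have hiter : ∀ n : ℕ, ∀ s ∈ Set.Icc (0:ℝ) L, ∀ t ∈ Set.Icc (0:ℝ) L, s ≤ t →
      angle (T s) (T t) ≤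
        2 * ((n:ℝ) + 1) * Real.arcsin ((t - s) / (2 * ((n:ℝ) + 1) * r)) := by
    intro n
    induction n with
    | zero =>
      intro s hs t ht hst
      have := hstep s hs t ht hst
      norm_num at this ⊢
      convert this using 3 <;> ring
    | succ n ih =>
      intro s hs t ht hst
      set m := s + (t - s) / ((n:ℝ) + 2) with hm
      have hn2 : (0:ℝ) < (n:ℝ) + 2 := by positivity
      have hms : s ≤ m := by
        rw [hm]
        have : 0 ≤ (t - s) / ((n:ℝ) + 2) := div_nonneg (by linarith) hn2.le
        linarith
      have hmt : m ≤ t := by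
        rw [hm]
        have := div_le_self (by linarith : (0:ℝ) ≤ t - s) (by linarith : (1:ℝ) ≤ (n:ℝ) + 2)
        linarith
      have hmI : m ∈ Set.Icc (0:ℝ) L := ⟨le_trans hs.1 hms, le_trans hmt ht.2⟩
      have h1 := hstep s hs m hmI hms
      have h2 := ih m hmI t ht hmt
      have e1 : (m - s) / (2 * r) = (t - s) / (2 * ((n:ℝ) + 2) * r) := by
        rw [hm]; field_simp; ring
      have e2 : (t - m) / (2 * ((n:ℝ) + 1) * r) = (t - s) / (2 * ((n:ℝ) + 2) * r) := by
        rw [hm]; field_simp; ring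
      rw [e1] at h1
      rw [e2] at h2
      have tri := angle_triangle_unit (hunit s hs) (hunit m hmI) (hunit t ht)
      push_cast
      have e4 : ((n:ℝ) + 1 + 1) = (n:ℝ) + 2 := by ring
      rw [e4]
      linarith
  have hang : ∀ s ∈ Set.Icc (0:ℝ) L, ∀ t ∈ Set.Icc (0:ℝ) L, s ≤ t →
      angle (T s) (T t) ≤ (t - s) / r := by
    intro s hs t ht hst
    set x := (t - s) / r with hx
    have hx0 : 0 ≤ x := div_nonneg (by linarith) hr.le
    refine le_of_forall_pos_le_add ?_
    intro ε hε
    obtain ⟨n, hn⟩ := exists_nat_ge (max x (x ^ 3 / (4 * ε)))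
    set k := (n:ℝ) + 1 with hkdef
    have hncast : (0:ℝ) ≤ (n:ℝ) := Nat.cast_nonneg n
    have hk1 : (1:ℝ) ≤ k := by rw [hkdef]; linarith
    have hkx : x ≤ k := by
      have h6 := le_trans (le_max_left x (x ^ 3 / (4 * ε))) hn
      rw [hkdef]; linarith
    have hkε : x ^ 3 / (4 * ε) ≤ k := by
      have h6 := le_trans (le_max_right x (x ^ 3 / (4 * ε))) hn
      rw [hkdef]; linarith
    have hk0 : (0:ℝ) < k := by linarith
    have hy0 : 0 ≤ x / (2 * k) := by positivity
    have hy : x / (2 * k) ≤ 1 / 2 := by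
      rw [div_le_div_iff₀ (by positivity) two_pos]; linarith
    have harc := arcsin_le_self_add_cube hy0 hy
    have h := hiter n s hs t ht hst
    have e : (t - s) / (2 * ((n:ℝ) + 1) * r) = x / (2 * k) := by
      rw [hx, hkdef, div_div]; ring_nf
    rw [e] at h
    rw [← hkdef] at h
    have h2 : 2 * k * Real.arcsin (x / (2 * k)) ≤ 2 * k * (x / (2 * k) + (x / (2 * k)) ^ 3) :=
      mul_le_mul_of_nonneg_left harc (by positivity)
    have e2 : 2 * k * (x / (2 * k) + (x / (2 * k)) ^ 3) = x + x ^ 3 / (4 * k ^ 2) := by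
      field_simp; ring
    have h4 : x ^ 3 / (4 * k ^ 2) ≤ ε := by
      rw [div_le_iff₀ (by positivity)]
      have h5 : x ^ 3 ≤ k * (4 * ε) := (div_le_iff₀ (by positivity)).1 hkε
      nlinarith [mul_nonneg (mul_nonneg hε.le hk0.le) (sub_nonneg.2 hk1)]
    rw [e2] at h2
    linarith
  -- the chord bound : 2 r sin (L/(2r)) ≤ d
  have hhalf : L / 2 ∈ Set.Icc (0:ℝ) L := ⟨by linarith, by linarith⟩
  set u := T (L / 2) with hu_def
  have hu : ‖u‖ = 1 := hunit _ hhalf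
  have huIcc : Set.uIcc (0:ℝ) L = Set.Icc 0 L := Set.uIcc_of_le hL.le
  have hder : ∀ s ∈ Set.uIcc (0:ℝ) L,
      HasDerivAt (fun t => (⟪c t, u⟫ : ℝ)) (⟪T s, u⟫ : ℝ) s := by
    intro s hs
    rw [huIcc] at hs
    have h := HasDerivAt.inner ℝ (hc s hs) (hasDerivAt_const s u)
    simpa using h
  have hcTint : IntervalIntegrable (fun s => (⟪T s, u⟫ : ℝ)) volume 0 L := by
    apply ContinuousOn.intervalIntegrable
    rw [huIcc]
    exact ContinuousOn.inner
      (fun s hs => ((hT s hs).continuousAt).continuousWithinAt) continuousOn_const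
  have hFTC := intervalIntegral.integral_eq_sub_of_hasDerivAt hder hcTint
  have hGder : ∀ s ∈ Set.uIcc (0:ℝ) L,
      HasDerivAt (fun t => r * Real.sin ((t - L / 2) / r)) (Real.cos ((s - L / 2) / r)) s := by
    intro s _
    have h1 : HasDerivAt (fun t : ℝ => (t - L / 2) / r) (1 / r) s := by
      simpa using ((hasDerivAt_id s).sub_const (L / 2)).div_const r
    have h2 := (Real.hasDerivAt_sin ((s - L / 2) / r)).comp s h1
    have h3 := h2.const_mul r
    refine h3.congr_deriv ?_
    rw [mul_comm, mul_assoc, one_div_mul_cancel hr.ne', mul_one]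
  have hcoscont : Continuous fun s : ℝ => Real.cos ((s - L / 2) / r) :=
    Real.continuous_cos.comp ((continuous_id.sub continuous_const).div_const r)
  have hcosint : IntervalIntegrable (fun s => Real.cos ((s - L / 2) / r)) volume 0 L :=
    hcoscont.intervalIntegrable 0 L
  have hcosval := intervalIntegral.integral_eq_sub_of_hasDerivAt hGder hcosint
  have hcosval' : ∫ s in (0:ℝ)..L, Real.cos ((s - L / 2) / r) = 2 * r * Real.sin (L / (2 * r)) := by
    rw [hcosval]
    have e1 : (L - L / 2) / r = L / (2 * r) := by ring
    have e2 : ((0:ℝ) - L / 2) / r = -(L / (2 * r)) := by ring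
    rw [e1, e2, Real.sin_neg]; ring
  have hpt : ∀ s ∈ Set.Icc (0:ℝ) L, Real.cos ((s - L / 2) / r) ≤ (⟪T s, u⟫ : ℝ) := by
    intro s hs
    have hang1 : angle (T s) u ≤ |s - L / 2| / r := by
      rcases le_total s (L / 2) with h | h
      · have h2 := hang s hs (L / 2) hhalf h
        rwa [abs_of_nonpos (by linarith : s - L / 2 ≤ 0), neg_sub]
      · have h2 := hang (L / 2) hhalf s hs h
        rw [angle_comm] at h2
        rwa [abs_of_nonneg (by linarith : (0:ℝ) ≤ s - L / 2)]
    have hle : |s - L / 2| / r ≤ Real.pi := by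
      have h1 : |s - L / 2| ≤ L / 2 :=
        abs_le.2 ⟨by linarith [hs.1], by linarith [hs.2]⟩
      rw [div_le_iff₀ hr]
      nlinarith
    have hcos := Real.cos_le_cos_of_nonneg_of_le_pi (angle_nonneg (T s) u) hle hang1
    have e : Real.cos ((s - L / 2) / r) = Real.cos (|s - L / 2| / r) := by
      rw [← Real.cos_abs ((s - L / 2) / r), abs_div, abs_of_pos hr]
    have hca : Real.cos (angle (T s) u) = (⟪T s, u⟫ : ℝ) := by
      rw [cos_angle, hunit s hs, hu]; norm_num
    rw [e, ← hca]
    exact hcos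
  have hmono := intervalIntegral.integral_mono_on hL.le hcosint hcTint hpt
  have hkey : 2 * r * Real.sin (L / (2 * r)) ≤ d := by
    have h1 : (⟪c L, u⟫ : ℝ) - ⟪c 0, u⟫ = ⟪c L - c 0, u⟫ := (inner_sub_left _ _ _).symm
    have h2 : (⟪c L - c 0, u⟫ : ℝ) ≤ d := by
      have h3 := real_inner_le_norm (c L - c 0) u
      rwa [hu, mul_one] at h3
    rw [hcosval'] at hmono
    rw [hFTC, h1] at hmono
    linarith
  have hsin_le : Real.sin (L / (2 * r)) ≤ d / (2 * r) := by
    rw [le_div_iff₀ (by positivity)]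
    nlinarith
  rcases le_or_gt L (Real.pi * r) with hcase | hcase
  · left
    have h1 : L / (2 * r) ≤ Real.pi / 2 := by
      rw [div_le_div_iff₀ (by positivity) two_pos]; nlinarith
    have h0 : (0:ℝ) ≤ L / (2 * r) := by positivity
    have hmo := Real.monotone_arcsin hsin_le
    rw [Real.arcsin_sin (by linarith [Real.pi_pos]) h1] at hmo
    calc L = 2 * r * (L / (2 * r)) := by field_simp
      _ ≤ 2 * r * Real.arcsin (d / (2 * r)) :=
        mul_le_mul_of_nonneg_left hmo (by positivity)
  · right
    have hπ2 : Real.pi / 2 ≤ L / (2 * r) := by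
      rw [div_le_div_iff₀ two_pos (by positivity)]; nlinarith
    have hπ1 : L / (2 * r) ≤ Real.pi := by
      rw [div_le_iff₀ (by positivity)]; nlinarith
    have hs : Real.sin (Real.pi - L / (2 * r)) ≤ d / (2 * r) := by
      rw [Real.sin_pi_sub]; exact hsin_le
    have hmo := Real.monotone_arcsin hs
    rw [Real.arcsin_sin (by linarith [Real.pi_pos]) (by linarith)] at hmo
    have h5 := mul_le_mul_of_nonneg_left hmo (by positivity : (0:ℝ) ≤ 2 * r)
    have e : 2 * r * (Real.pi - L / (2 * r)) = 2 * Real.pi * r - L := by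
      field_simp
    linarith
end
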